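/- For identical agents: in the greedy partition (M_1,...,M_n) of a maximum weight matching M, if agent n (the owner of the lightest part) envies part M_i for more than one item — i.e., u(V(M_n)) < u(V(M_i) \ {v}) for every vertex v ∈ V(M_i) — then |M_i| ≥ 3. -/

import Mathlib

open Finset

variable {V : Type*} [Fintype V] [DecidableEq V]

/-- `M` is a matching of `G` using only vertices in `S`. -/
def IsMatchingOn (G : SimpleGraph V) (S : Set V) (M : Finset (Sym2 V)) : Prop :=
  (∀ e ∈ M, e ∈ G.edgeSet) ∧ (∀ e ∈ M, ∀ v ∈ e, v ∈ S) ∧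
    (∀ e ∈ M, ∀ f ∈ M, e ≠ f → ∀ v : V, v ∈ e → v ∉ f)

/-- total weight of a set of edges -/
noncomputable def matchWeight (w : Sym2 V → ℝ) (M : Finset (Sym2 V)) : ℝ :=
  ∑ e ∈ M, w e

/-- maximum weight of a matching within the induced subgraph `G[S]` -/
noncomputable def util (G : SimpleGraph V) (w : Sym2 V → ℝ) (S : Set V) : ℝ :=
  sSup {x | ∃ M : Finset (Sym2 V), IsMatchingOn G S M ∧ x = matchWeight w M}

/-- `M` is a maximum-weight matching of `G`. -/
def IsMaxMatching (G : SimpleGraph V) (w : Sym2 V → ℝ) (M : Finset (Sym2 V)) : Prop :=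
  IsMatchingOn G Set.univ M ∧
    ∀ M' : Finset (Sym2 V), IsMatchingOn G Set.univ M' → matchWeight w M' ≤ matchWeight w M

/-- an `n`-partition of the vertex set -/
def IsPartition (n : ℕ) (X : Fin n → Set V) : Prop :=
  (∀ i j, i ≠ j → Disjoint (X i) (X j)) ∧ (⋃ i, X i) = Set.univ

/-- maximin share for identical utility `util G w` among `n` agents -/
noncomputable def MMS (G : SimpleGraph V) (w : Sym2 V → ℝ) (n : ℕ) : ℝ :=
  sSup {x | ∃ X : Fin n → Set V, IsPartition n X ∧ x = ⨅ i, util G w (X i)}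

/-- an index of a bundle of minimum current weight -/
noncomputable def minIdx {n : ℕ} [NeZero n] (w : Sym2 V → ℝ)
    (P : Fin n → Finset (Sym2 V)) : Fin n :=
  Classical.choose (Finset.exists_min_image Finset.univ
    (fun i => matchWeight w (P i)) ⟨0, Finset.mem_univ 0⟩)

/-- process a list of edges, adding each to a currently lightest bundle -/
noncomputable def greedyAux {n : ℕ} [NeZero n] (w : Sym2 V → ℝ) :
    List (Sym2 V) → (Fin n → Finset (Sym2 V)) → (Fin n → Finset (Sym2 V))
  | [], P => P
  | e :: es, P => greedyAux w es (Function.update P (minIdx w P) (insert e (P (minIdx w P))))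

/-- `P` is a greedy partition of the matching `M` into `n` bundles,
relabelled so that weights are non-increasing. -/
def IsGreedyPartition {n : ℕ} [NeZero n] (w : Sym2 V → ℝ) (M : Finset (Sym2 V))
    (P : Fin n → Finset (Sym2 V)) : Prop :=
  ∃ (L : List (Sym2 V)) (σ : Equiv.Perm (Fin n)),
    L.Nodup ∧ L.toFinset = M ∧ L.Pairwise (fun a b => w b ≤ w a) ∧
    P = (greedyAux w L (fun _ => (∅ : Finset (Sym2 V)))) ∘ σ ∧
    ∀ i j : Fin n, i ≤ j → matchWeight w (P j) ≤ matchWeight w (P i)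

/-- vertices touched by a set of edges -/
def verts (M : Finset (Sym2 V)) : Set V := {v | ∃ e ∈ M, v ∈ e}

/-- envy-freeness up to one item -/
def EF1Alloc {n : ℕ} (G : SimpleGraph V) (w : Fin n → Sym2 V → ℝ)
    (X : Fin n → Set V) : Prop :=
  ∀ i j : Fin n, i ≠ j → ∃ g : V, util G (w i) (X j \ {g}) ≤ util G (w i) (X i)

/-- agent `i` envies bundle `j` for more than one item (EF1-graph edge) -/
def MoreThanOneEnvy {n : ℕ} (G : SimpleGraph V) (w : Sym2 V → ℝ)
    (X : Fin n → Set V) (i j : Fin n) : Prop :=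
  (X j).Nonempty ∧ ∀ v ∈ X j, util G w (X i) < util G w (X j \ {v})

section Aux
set_option linter.unusedSectionVars false
variable {V : Type*} [Fintype V] [DecidableEq V]

lemma utilSet_finite (G : SimpleGraph V) (w : Sym2 V → ℝ) (S : Set V) :
    {x | ∃ M : Finset (Sym2 V), IsMatchingOn G S M ∧ x = matchWeight w M}.Finite := by
  have : {x | ∃ M : Finset (Sym2 V), IsMatchingOn G S M ∧ x = matchWeight w M} ⊆
      Set.range (matchWeight w) := by
    rintro x ⟨M, _, rfl⟩; exact ⟨M, rfl⟩
  exact (Set.finite_range _).subset this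

lemma empty_isMatchingOn (G : SimpleGraph V) (S : Set V) :
    IsMatchingOn G S (∅ : Finset (Sym2 V)) := by
  refine ⟨?_, ?_, ?_⟩ <;> simp

lemma le_util (G : SimpleGraph V) (w : Sym2 V → ℝ) (S : Set V) {M : Finset (Sym2 V)}
    (hM : IsMatchingOn G S M) : matchWeight w M ≤ util G w S :=
  le_csSup (utilSet_finite G w S).bddAbove ⟨M, hM, rfl⟩

lemma util_le (G : SimpleGraph V) (w : Sym2 V → ℝ) (S : Set V) {c : ℝ}
    (h : ∀ M : Finset (Sym2 V), IsMatchingOn G S M → matchWeight w M ≤ c) :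
    util G w S ≤ c := by
  refine csSup_le ⟨0, ∅, empty_isMatchingOn G S, by simp [matchWeight]⟩ ?_
  rintro x ⟨M, hM, rfl⟩; exact h M hM

lemma util_nonneg (G : SimpleGraph V) (w : Sym2 V → ℝ) (S : Set V) : 0 ≤ util G w S := by
  have := le_util G w S (empty_isMatchingOn G S)
  simpa [matchWeight] using this

lemma util_subsingleton (G : SimpleGraph V) (w : Sym2 V → ℝ) {S : Set V}
    (hS : S.Subsingleton) : util G w S ≤ 0 := by
  refine util_le G w S ?_
  intro M hM
  have : M = ∅ := by
    refine Finset.eq_empty_of_forall_notMem ?_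
    intro f hf
    induction f using Sym2.ind with
    | _ x y =>
      have hadj : G.Adj x y := (SimpleGraph.mem_edgeSet G).1 (hM.1 _ hf)
      have hx : x ∈ S := hM.2.1 _ hf x (by simp)
      have hy : y ∈ S := hM.2.1 _ hf y (by simp)
      exact hadj.ne (hS hx hy)
  simp [this, matchWeight]

end Aux
section Aux2
set_option linter.unusedSectionVars false
variable {V : Type*} [Fintype V] [DecidableEq V]

lemma minIdx_spec {n : ℕ} [NeZero n] (w : Sym2 V → ℝ) (P : Fin n → Finset (Sym2 V))
    (k : Fin n) : matchWeight w (P (minIdx w P)) ≤ matchWeight w (P k) :=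
  (Classical.choose_spec (Finset.exists_min_image Finset.univ
    (fun i => matchWeight w (P i)) ⟨0, Finset.mem_univ 0⟩)).2 k (Finset.mem_univ k)

lemma matchWeight_le_insert (w : Sym2 V → ℝ) (hw : ∀ e, 0 ≤ w e) (e : Sym2 V)
    (s : Finset (Sym2 V)) : matchWeight w s ≤ matchWeight w (insert e s) :=
  Finset.sum_le_sum_of_subset_of_nonneg (Finset.subset_insert e s)
    (fun f _ _ => hw f)

lemma greedyAux_subset {n : ℕ} [NeZero n] (w : Sym2 V → ℝ) :
    ∀ (L : List (Sym2 V)) (P : Fin n → Finset (Sym2 V)) (j : Fin n),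
      greedyAux w L P j ⊆ P j ∪ L.toFinset := by
  intro L
  induction L with
  | nil => intro P j; simp [greedyAux]
  | cons e es ih =>
    intro P j
    refine (ih _ j).trans ?_
    intro f hf
    simp only [Finset.mem_union] at hf ⊢
    rcases hf with hf | hf
    · by_cases hj : j = minIdx w P
      · subst hj
        simp only [Function.update_self, Finset.mem_insert] at hf
        rcases hf with rfl | hf
        · right; simp
        · left; exact hf
      · rw [Function.update_of_ne hj] at hf; left; exact hf
    · right; simp [hf]

lemma greedyAux_weight_mono {n : ℕ} [NeZero n] (w : Sym2 V → ℝ) (hw : ∀ e, 0 ≤ w e) :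
    ∀ (L : List (Sym2 V)) (P : Fin n → Finset (Sym2 V)) (j : Fin n),
      matchWeight w (P j) ≤ matchWeight w (greedyAux w L P j) := by
  intro L
  induction L with
  | nil => intro P j; simp [greedyAux]
  | cons e es ih =>
    intro P j
    refine le_trans ?_ (ih _ j)
    by_cases hj : j = minIdx w P
    · subst hj; rw [Function.update_self]; exact matchWeight_le_insert w hw e _
    · rw [Function.update_of_ne hj]

lemma greedy_key {n : ℕ} [NeZero n] (w : Sym2 V → ℝ) (hw : ∀ e, 0 ≤ w e) :
    ∀ (L : List (Sym2 V)) (P : Fin n → Finset (Sym2 V)),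
      L.Pairwise (fun a b => w b ≤ w a) → L.Nodup →
      (∀ f ∈ L, ∀ j, f ∉ P j) →
      (∀ f ∈ L, ∀ j, ∀ g ∈ P j, w f ≤ w g) →
      (∀ j, 2 ≤ (P j).card → ∀ g ∈ P j, ∀ k, w g ≤ matchWeight w (P k)) →
      ∀ j, 2 ≤ ((greedyAux w L P) j).card →
        ∀ g ∈ greedyAux w L P j, ∀ k, w g ≤ matchWeight w (greedyAux w L P k) := by
  intro L
  induction L with
  | nil => intro P _ _ _ _ h j; exact h j
  | cons e es ih =>
    intro P hsort hnd hc1 hc2 hkey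
    set m := minIdx w P with hm
    set P₁ := Function.update P m (insert e (P m)) with hP₁
    have hsort' : es.Pairwise (fun a b => w b ≤ w a) := (List.pairwise_cons.1 hsort).2
    have hle : ∀ f ∈ es, w f ≤ w e := (List.pairwise_cons.1 hsort).1
    have hnd' : es.Nodup := (List.nodup_cons.1 hnd).2
    have hene : e ∉ es := (List.nodup_cons.1 hnd).1
    have hc1e : ∀ j, e ∉ P j := fun j => hc1 e List.mem_cons_self j
    have hc2e : ∀ j, ∀ g ∈ P j, w e ≤ w g := fun j => hc2 e List.mem_cons_self j
    have hP₁mem : ∀ j g, g ∈ P₁ j → g = e ∨ g ∈ P j := by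
      intro j g hg
      by_cases hj : j = m
      · subst hj; rw [hP₁, Function.update_self] at hg
        exact Finset.mem_insert.1 hg
      · rw [hP₁, Function.update_of_ne hj] at hg; exact Or.inr hg
    have hwmono : ∀ k, matchWeight w (P k) ≤ matchWeight w (P₁ k) := by
      intro k
      by_cases hk : k = m
      · subst hk; rw [hP₁, Function.update_self]; exact matchWeight_le_insert w hw e _
      · rw [hP₁, Function.update_of_ne hk]
    have hkey' : ∀ j, 2 ≤ (P₁ j).card → ∀ g ∈ P₁ j, ∀ k, w g ≤ matchWeight w (P₁ k) := by
      intro j hcard g hg k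
      by_cases hj : j = m
      · subst hj
        rw [hP₁, Function.update_self] at hcard
        by_cases hc : 2 ≤ (P m).card
        · rcases hP₁mem m g hg with rfl | hgm
          · obtain ⟨g₀, hg₀⟩ : (P m).Nonempty := Finset.card_pos.1 (by omega)
            exact le_trans (hc2e m g₀ hg₀) (le_trans (hkey m hc g₀ hg₀ k) (hwmono k))
          · exact le_trans (hkey m hc g hgm k) (hwmono k)
        · -- card (P m) ≤ 1, and insert has card ≥ 2, so card = 1
          have h1 : (P m).card = 1 := by
            have := Finset.card_insert_le e (P m); omega
          obtain ⟨g₀, hg₀⟩ := Finset.card_eq_one.1 h1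
          have hwg₀ : matchWeight w (P m) = w g₀ := by simp [matchWeight, hg₀]
          have hmin : ∀ k', w g₀ ≤ matchWeight w (P k') := by
            intro k'; rw [← hwg₀, hm]; exact minIdx_spec w P k'
          rcases hP₁mem m g hg with rfl | hgm
          · exact le_trans (hc2e m g₀ (by simp [hg₀])) (le_trans (hmin k) (hwmono k))
          · rw [hg₀] at hgm
            rcases Finset.mem_singleton.1 hgm with rfl
            exact le_trans (hmin k) (hwmono k)
      · rw [hP₁, Function.update_of_ne hj] at hcard hg
        -- g ∈ P j, bundle untouched
        have hc : 2 ≤ (P j).card := hcard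
        exact le_trans (hkey j hc g hg k) (hwmono k)
    refine ih P₁ hsort' hnd' ?_ ?_ hkey'
    · intro f hf j
      intro hmem
      rcases hP₁mem j f hmem with rfl | hfj
      · exact hene hf
      · exact hc1 f (List.mem_cons_of_mem e hf) j hfj
    · intro f hf j g hg
      rcases hP₁mem j g hg with rfl | hgj
      · exact hle f hf
      · exact hc2 f (List.mem_cons_of_mem e hf) j g hgj

end Aux2
section Aux3
set_option linter.unusedSectionVars false
variable {V : Type*} [Fintype V] [DecidableEq V]

lemma sym2_exists_mem (f : Sym2 V) : ∃ v, v ∈ f := by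
  induction f using Sym2.ind with
  | _ x y => exact ⟨x, by simp⟩

lemma swap_bound (G : SimpleGraph V) (w : Sym2 V → ℝ) {M : Finset (Sym2 V)}
    {e e' f g : Sym2 V} (hM : IsMaxMatching G w M) (he : e ∈ M) (he' : e' ∈ M)
    (hee' : e ≠ e') (hf : f ∈ G.edgeSet) (hg : g ∈ G.edgeSet) (hfg : f ≠ g)
    (hdisj : ∀ v ∈ f, v ∉ g) (hfv : ∀ v ∈ f, v ∈ e ∨ v ∈ e')
    (hgv : ∀ v ∈ g, v ∈ e ∨ v ∈ e') : w f + w g ≤ w e + w e' := by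
  classical
  set M₀ := (M.erase e).erase e' with hM₀
  have hmem₀ : ∀ h ∈ M₀, h ∈ M ∧ h ≠ e ∧ h ≠ e' := by
    intro h hh
    rw [hM₀, Finset.mem_erase, Finset.mem_erase] at hh
    exact ⟨hh.2.2, hh.2.1, hh.1⟩
  -- any edge of M₀ is vertex-disjoint from e and e'
  have hdis : ∀ h ∈ M₀, ∀ v, (v ∈ e ∨ v ∈ e') → v ∉ h := by
    intro h hh v hv
    obtain ⟨hhM, hhe, hhe'⟩ := hmem₀ h hh
    rcases hv with hv | hv
    · exact hM.1.2.2 e he h hhM (Ne.symm hhe) v hv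
    · exact hM.1.2.2 e' he' h hhM (Ne.symm hhe') v hv
  have hfnot : f ∉ M₀ := by
    intro hfin
    obtain ⟨v, hv⟩ := sym2_exists_mem f
    exact hdis f hfin v (hfv v hv) hv
  have hgnot : g ∉ M₀ := by
    intro hgin
    obtain ⟨v, hv⟩ := sym2_exists_mem g
    exact hdis g hgin v (hgv v hv) hv
  set M'' := insert f (insert g M₀) with hM''
  have hmemM'' : ∀ h ∈ M'', h = f ∨ h = g ∨ h ∈ M₀ := by
    intro h hh
    rw [hM'', Finset.mem_insert, Finset.mem_insert] at hh
    tauto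
  have hmatch : IsMatchingOn G Set.univ M'' := by
    refine ⟨?_, fun _ _ _ _ => Set.mem_univ _, ?_⟩
    · intro h hh
      rcases hmemM'' h hh with rfl | rfl | hh₀
      · exact hf
      · exact hg
      · exact hM.1.1 h (hmem₀ h hh₀).1
    · intro h1 h1m h2 h2m hne v hv
      rcases hmemM'' h1 h1m with rfl | rfl | h1m₀ <;>
        rcases hmemM'' h2 h2m with rfl | rfl | h2m₀
      · exact absurd rfl hne
      · exact hdisj v hv
      · exact hdis h2 h2m₀ v (hfv v hv)
      · intro hv2; exact hdisj v hv2 hv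
      · exact absurd rfl hne
      · exact hdis h2 h2m₀ v (hgv v hv)
      · intro hv2; exact hdis h1 h1m₀ v (hfv v hv2) hv
      · intro hv2; exact hdis h1 h1m₀ v (hgv v hv2) hv
      · exact hM.1.2.2 h1 (hmem₀ h1 h1m₀).1 h2 (hmem₀ h2 h2m₀).1 hne v hv
  have hwM'' : matchWeight w M'' = w f + w g + (matchWeight w M - w e - w e') := by
    rw [hM'', matchWeight, Finset.sum_insert (by simp [hfnot, hfg]),
      Finset.sum_insert hgnot, hM₀,
      Finset.sum_erase_eq_sub (Finset.mem_erase.2 ⟨Ne.symm hee', he'⟩),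
      Finset.sum_erase_eq_sub he, matchWeight]
    ring
  have := hM.2 M'' hmatch
  rw [hwM''] at this
  linarith

lemma edge_in_triple (G : SimpleGraph V) {f : Sym2 V} (hf : f ∈ G.edgeSet)
    {x y z : V} (h : ∀ v ∈ f, v ∈ ({x, y, z} : Set V)) :
    f = s(x, y) ∨ f = s(x, z) ∨ f = s(y, z) := by
  induction f using Sym2.ind with
  | _ p q =>
    have hpq : p ≠ q := (SimpleGraph.mem_edgeSet G).1 hf |>.ne
    have hp := h p (by simp)
    have hq := h q (by simp)
    simp only [Set.mem_insert_iff, Set.mem_singleton_iff] at hp hq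
    rcases hp with rfl | rfl | rfl <;> rcases hq with rfl | rfl | rfl <;>
      simp_all [Sym2.eq_iff] 

lemma util_le_triple (G : SimpleGraph V) (w : Sym2 V → ℝ) {S : Set V} {x y z : V}
    {c : ℝ} (hS : S ⊆ ({x, y, z} : Set V)) (hc : 0 ≤ c)
    (h : ∀ f ∈ G.edgeSet, (∀ v ∈ f, v ∈ S) → w f ≤ c) : util G w S ≤ c := by
  refine util_le G w S ?_
  intro M' hM'
  have hcard : M'.card ≤ 1 := by
    by_contra hcard
    have h2 : 1 < M'.card := by omega
    obtain ⟨f, hfm, g, hgm, hfg⟩ := Finset.one_lt_card.1 h2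
    induction f using Sym2.ind with
    | _ p q =>
    induction g using Sym2.ind with
    | _ r t =>
      have hpq : p ≠ q := ((SimpleGraph.mem_edgeSet G).1 (hM'.1 _ hfm)).ne
      have hrt : r ≠ t := ((SimpleGraph.mem_edgeSet G).1 (hM'.1 _ hgm)).ne
      have hd := hM'.2.2 _ hfm _ hgm hfg
      have hpr : p ≠ r := fun hh => hd p (by simp) (by simp [hh])
      have hpt : p ≠ t := fun hh => hd p (by simp) (by simp [hh])
      have hqr : q ≠ r := fun hh => hd q (by simp) (by simp [hh])
      have hqt : q ≠ t := fun hh => hd q (by simp) (by simp [hh])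
      have hp := hS (hM'.2.1 _ hfm p (by simp))
      have hq := hS (hM'.2.1 _ hfm q (by simp))
      have hr := hS (hM'.2.1 _ hgm r (by simp))
      have ht := hS (hM'.2.1 _ hgm t (by simp))
      simp only [Set.mem_insert_iff, Set.mem_singleton_iff] at hp hq hr ht
      rcases hp with rfl | rfl | rfl <;> rcases hq with rfl | rfl | rfl <;>
        rcases hr with rfl | rfl | rfl <;> rcases ht with rfl | rfl | rfl <;>
        simp_all
  interval_cases hc1 : M'.card
  · rw [Finset.card_eq_zero.1 hc1]
    simpa [matchWeight] using hc
  · obtain ⟨f, rfl⟩ := Finset.card_eq_one.1 hc1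
    have hfm : f ∈ ({f} : Finset (Sym2 V)) := by simp
    have := h f (hM'.1 f hfm) (fun v hv => hM'.2.1 f hfm v hv)
    simpa [matchWeight] using this

end Aux3
lemma sym2_exists_rep {V : Type*} (f : Sym2 V) : ∃ a b, f = s(a, b) := by
  induction f using Sym2.ind with
  | _ a b => exact ⟨a, b, rfl⟩

set_option maxHeartbeats 1600000 in
/-- in the greedy partition of a maximum weight matching, if the
agent holding the lightest bundle envies bundle M_i for more than one item, then
|M_i| ≥ 3. -/
theorem stmt15 {V : Type*} [Fintype V] [DecidableEq V] (G : SimpleGraph V)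
    (w : Sym2 V → ℝ) (hw : ∀ e, 0 ≤ w e) (n : ℕ)
    (M : Finset (Sym2 V)) (hM : IsMaxMatching G w M)
    (P : Fin (n + 1) → Finset (Sym2 V)) (hP : IsGreedyPartition w M P)
    (i : Fin (n + 1))
    (henvy1 : util G w (verts (P (Fin.last n))) < util G w (verts (P i)))
    (henvy2 : ∀ v ∈ verts (P i),
      util G w (verts (P (Fin.last n))) < util G w (verts (P i) \ {v})) :
    3 ≤ (P i).card := by
  obtain ⟨L, σ, hnd, hLM, hsort, hPdef, hmono⟩ := hP
  have hPi' : ∀ j, P j = greedyAux w L (fun _ => ∅) (σ j) := fun j => congrFun hPdef j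
  have hPsub : ∀ j, P j ⊆ M := by
    intro j
    rw [hPi' j]
    have := greedyAux_subset w L (fun _ => (∅ : Finset (Sym2 V))) (σ j)
    simpa [hLM] using this
  have hPmatch : ∀ j, IsMatchingOn G (verts (P j)) (P j) := by
    intro j
    exact ⟨fun e he => hM.1.1 e (hPsub j he), fun e he v hv => ⟨e, he, hv⟩,
      fun e he f hf hne v hv => hM.1.2.2 e (hPsub j he) f (hPsub j hf) hne v hv⟩
  have hlastge : matchWeight w (P (Fin.last n)) ≤ util G w (verts (P (Fin.last n))) :=
    le_util _ _ _ (hPmatch _)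
  by_contra hcard
  push_neg at hcard
  have hcases : (P i).card = 0 ∨ (P i).card = 1 ∨ (P i).card = 2 := by omega
  rcases hcases with hc | hc | hc
  · -- card 0
    have hPi0 : P i = ∅ := Finset.card_eq_zero.1 hc
    have hss : (verts (P i)).Subsingleton := fun u hu => absurd hu (by simp [verts, hPi0])
    have := util_subsingleton G w hss
    linarith [util_nonneg G w (verts (P (Fin.last n)))]
  · -- card 1
    obtain ⟨e, hPi1⟩ := Finset.card_eq_one.1 hc
    have he : e ∈ M := hPsub i (by rw [hPi1]; simp)
    obtain ⟨a, b, rfl⟩ := sym2_exists_rep e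
    have hverts : verts (P i) = {a, b} := by
      ext v; simp [verts, hPi1, Sym2.mem_iff]
    have hss : (verts (P i) \ {a}).Subsingleton := by
      rw [hverts]
      intro u hu v hv
      simp only [Set.mem_diff, Set.mem_insert_iff, Set.mem_singleton_iff] at hu hv
      have hu' : u = b := by tauto
      have hv' : v = b := by tauto
      rw [hu', hv']
    have h1 := henvy2 a (by rw [hverts]; simp)
    have h2 := util_subsingleton G w hss
    linarith [util_nonneg G w (verts (P (Fin.last n)))]
  · -- card 2
    obtain ⟨e, e', hee', hPi2⟩ := Finset.card_eq_two.1 hc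
    have he : e ∈ M := hPsub i (by rw [hPi2]; simp)
    have he' : e' ∈ M := hPsub i (by rw [hPi2]; simp)
    obtain ⟨a, b, rfl⟩ := sym2_exists_rep e
    obtain ⟨a', b', rfl⟩ := sym2_exists_rep e'
    have hab : a ≠ b := ((SimpleGraph.mem_edgeSet G).1 (hM.1.1 _ he)).ne
    have ha'b' : a' ≠ b' := ((SimpleGraph.mem_edgeSet G).1 (hM.1.1 _ he')).ne
    have hd := hM.1.2.2 _ he _ he' hee'
    have haa' : a ≠ a' := fun h => hd a (by simp) (by simp [h])
    have hab' : a ≠ b' := fun h => hd a (by simp) (by simp [h])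
    have hba' : b ≠ a' := fun h => hd b (by simp) (by simp [h])
    have hbb' : b ≠ b' := fun h => hd b (by simp) (by simp [h])
    have hba : b ≠ a := hab.symm
    have hb'a' : b' ≠ a' := ha'b'.symm
    have ha'a : a' ≠ a := haa'.symm
    have hb'a : b' ≠ a := hab'.symm
    have ha'b : a' ≠ b := hba'.symm
    have hb'b : b' ≠ b := hbb'.symm
    have hverts : verts (P i) = {a, b, a', b'} := by
      ext v; simp [verts, hPi2, Sym2.mem_iff]; tauto
    set c : ℝ := max (w s(a, b)) (w s(a', b')) with hcdef
    have hc0 : (0 : ℝ) ≤ c := le_trans (hw s(a, b)) (le_max_left _ _)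
    have hkey := greedy_key w hw L (fun _ => ∅) hsort hnd (by simp) (by simp)
      (by intro j h; simp at h) (σ i) (by rw [← hPi' i, hc])
    have hwe : w s(a, b) ≤ matchWeight w (P (Fin.last n)) := by
      rw [hPi' (Fin.last n)]
      exact hkey s(a, b) (by rw [← hPi' i, hPi2]; simp) (σ (Fin.last n))
    have hwe' : w s(a', b') ≤ matchWeight w (P (Fin.last n)) := by
      rw [hPi' (Fin.last n)]
      exact hkey s(a', b') (by rw [← hPi' i, hPi2]; simp) (σ (Fin.last n))
    have hclast : c ≤ util G w (verts (P (Fin.last n))) :=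
      le_trans (max_le hwe hwe') hlastge
    have hbad : ∀ v ∈ verts (P i), ∀ x y z : V,
        verts (P i) \ {v} ⊆ ({x, y, z} : Set V) →
        ∃ f, f ∈ G.edgeSet ∧ (∀ u ∈ f, u ∈ ({x, y, z} : Set V)) ∧ c < w f := by
      intro v hv x y z hsub
      by_contra hno
      push_neg at hno
      have hle : util G w (verts (P i) \ {v}) ≤ c := by
        refine util_le_triple G w (Set.Subset.refl _ |>.trans hsub) hc0 ?_
        intro f hfE hfv
        exact hno f hfE (fun u hu => hsub (hfv u hu))
      have := henvy2 v hv
      linarith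
    have hcontra : ∀ f g : Sym2 V, f ∈ G.edgeSet → g ∈ G.edgeSet →
        (∀ v ∈ f, v ∉ g) → c < w f → c < w g →
        (∀ v ∈ f, v ∈ s(a, b) ∨ v ∈ s(a', b')) →
        (∀ v ∈ g, v ∈ s(a, b) ∨ v ∈ s(a', b')) → False := by
      intro f g hfE hgE hdisj hfw hgw hfv hgv
      have hfg : f ≠ g := by
        rintro rfl
        obtain ⟨v, hv⟩ := sym2_exists_mem f
        exact hdisj v hv hv
      have := swap_bound G w hM he he' hee' hfE hgE hfg hdisj hfv hgv
      have h1 : w s(a, b) ≤ c := le_max_left _ _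
      have h2 : w s(a', b') ≤ c := le_max_right _ _
      linarith
    clear hkey hwe hwe' hmono henvy1 hlastge hPdef
    -- remove a' : edge within {a, b, b'}
    obtain ⟨f3, hf3E, hf3v, hf3w⟩ := hbad a' (by rw [hverts]; simp) a b b'
      (by rw [hverts]; intro u hu; simp only [Set.mem_diff, Set.mem_insert_iff,
        Set.mem_singleton_iff] at hu ⊢; tauto)
    -- remove b' : edge within {a, b, a'}
    obtain ⟨f4, hf4E, hf4v, hf4w⟩ := hbad b' (by rw [hverts]; simp) a b a'
      (by rw [hverts]; intro u hu; simp only [Set.mem_diff, Set.mem_insert_iff,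
        Set.mem_singleton_iff] at hu ⊢; tauto)
    -- remove a : edge within {b, a', b'}
    obtain ⟨f1, hf1E, hf1v, hf1w⟩ := hbad a (by rw [hverts]; simp) b a' b'
      (by rw [hverts]; intro u hu; simp only [Set.mem_diff, Set.mem_insert_iff,
        Set.mem_singleton_iff] at hu ⊢; tauto)
    -- remove b : edge within {a, a', b'}
    obtain ⟨f2, hf2E, hf2v, hf2w⟩ := hbad b (by rw [hverts]; simp) a a' b'
      (by rw [hverts]; intro u hu; simp only [Set.mem_diff, Set.mem_insert_iff,
        Set.mem_singleton_iff] at hu ⊢; tauto)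
    clear hbad henvy2 hclast hc0 hverts hd he he' hee' hPsub hPmatch hPi' hsort hnd hLM hM hw
    rcases edge_in_triple G hf3E hf3v with rfl | rfl | rfl
    · exact absurd hf3w (not_lt.2 (le_max_left _ _))
    · -- f3 = s(a, b')
      rcases edge_in_triple G hf4E hf4v with rfl | rfl | rfl
      · exact absurd hf4w (not_lt.2 (le_max_left _ _))
      · -- f4 = s(a, a') : shares a with f3; use f1 ∈ {s(b,a'), s(b,b'), s(a',b')}
        rcases edge_in_triple G hf1E hf1v with rfl | rfl | rfl
        · -- f1 = s(b, a') with f3 = s(a, b')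
          exact hcontra s(a, b') s(b, a') hf3E hf1E
            (by intro v hv hv2; simp only [Sym2.mem_iff] at hv hv2;
                rcases hv with rfl | rfl <;> rcases hv2 with rfl | rfl <;> first | exact hab rfl | exact hba rfl | exact haa' rfl | exact ha'a rfl | exact hab' rfl | exact hb'a rfl | exact hba' rfl | exact ha'b rfl | exact hbb' rfl | exact hb'b rfl | exact ha'b' rfl | exact hb'a' rfl)
            hf3w hf1w
            (by intro v hv; simp only [Sym2.mem_iff] at hv ⊢; tauto)
            (by intro v hv; simp only [Sym2.mem_iff] at hv ⊢; tauto)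
        · -- f1 = s(b, b') with f4 = s(a, a')
          exact hcontra s(a, a') s(b, b') hf4E hf1E
            (by intro v hv hv2; simp only [Sym2.mem_iff] at hv hv2;
                rcases hv with rfl | rfl <;> rcases hv2 with rfl | rfl <;> first | exact hab rfl | exact hba rfl | exact haa' rfl | exact ha'a rfl | exact hab' rfl | exact hb'a rfl | exact hba' rfl | exact ha'b rfl | exact hbb' rfl | exact hb'b rfl | exact ha'b' rfl | exact hb'a' rfl)
            hf4w hf1w
            (by intro v hv; simp only [Sym2.mem_iff] at hv ⊢; tauto)
            (by intro v hv; simp only [Sym2.mem_iff] at hv ⊢; tauto)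
        · exact absurd hf1w (not_lt.2 (le_max_right _ _))
      · -- f4 = s(b, a') with f3 = s(a, b')
        exact hcontra s(a, b') s(b, a') hf3E hf4E
          (by intro v hv hv2; simp only [Sym2.mem_iff] at hv hv2;
              rcases hv with rfl | rfl <;> rcases hv2 with rfl | rfl <;> first | exact hab rfl | exact hba rfl | exact haa' rfl | exact ha'a rfl | exact hab' rfl | exact hb'a rfl | exact hba' rfl | exact ha'b rfl | exact hbb' rfl | exact hb'b rfl | exact ha'b' rfl | exact hb'a' rfl)
          hf3w hf4w
          (by intro v hv; simp only [Sym2.mem_iff] at hv ⊢; tauto)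
          (by intro v hv; simp only [Sym2.mem_iff] at hv ⊢; tauto)
    · -- f3 = s(b, b')
      rcases edge_in_triple G hf4E hf4v with rfl | rfl | rfl
      · exact absurd hf4w (not_lt.2 (le_max_left _ _))
      · -- f4 = s(a, a') with f3 = s(b, b')
        exact hcontra s(b, b') s(a, a') hf3E hf4E
          (by intro v hv hv2; simp only [Sym2.mem_iff] at hv hv2;
              rcases hv with rfl | rfl <;> rcases hv2 with rfl | rfl <;> first | exact hab rfl | exact hba rfl | exact haa' rfl | exact ha'a rfl | exact hab' rfl | exact hb'a rfl | exact hba' rfl | exact ha'b rfl | exact hbb' rfl | exact hb'b rfl | exact ha'b' rfl | exact hb'a' rfl)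
          hf3w hf4w
          (by intro v hv; simp only [Sym2.mem_iff] at hv ⊢; tauto)
          (by intro v hv; simp only [Sym2.mem_iff] at hv ⊢; tauto)
      · -- f4 = s(b, a') : shares b with f3; use f2 ∈ {s(a,a'), s(a,b'), s(a',b')}
        rcases edge_in_triple G hf2E hf2v with rfl | rfl | rfl
        · -- f2 = s(a, a') with f3 = s(b, b')
          exact hcontra s(b, b') s(a, a') hf3E hf2E
            (by intro v hv hv2; simp only [Sym2.mem_iff] at hv hv2;
                rcases hv with rfl | rfl <;> rcases hv2 with rfl | rfl <;> first | exact hab rfl | exact hba rfl | exact haa' rfl | exact ha'a rfl | exact hab' rfl | exact hb'a rfl | exact hba' rfl | exact ha'b rfl | exact hbb' rfl | exact hb'b rfl | exact ha'b' rfl | exact hb'a' rfl)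
            hf3w hf2w
            (by intro v hv; simp only [Sym2.mem_iff] at hv ⊢; tauto)
            (by intro v hv; simp only [Sym2.mem_iff] at hv ⊢; tauto)
        · -- f2 = s(a, b') with f4 = s(b, a')
          exact hcontra s(a, b') s(b, a') hf2E hf4E
            (by intro v hv hv2; simp only [Sym2.mem_iff] at hv hv2;
                rcases hv with rfl | rfl <;> rcases hv2 with rfl | rfl <;> first | exact hab rfl | exact hba rfl | exact haa' rfl | exact ha'a rfl | exact hab' rfl | exact hb'a rfl | exact hba' rfl | exact ha'b rfl | exact hbb' rfl | exact hb'b rfl | exact ha'b' rfl | exact hb'a' rfl)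
            hf2w hf4w
            (by intro v hv; simp only [Sym2.mem_iff] at hv ⊢; tauto)
            (by intro v hv; simp only [Sym2.mem_iff] at hv ⊢; tauto)
        · exact absurd hf2w (not_lt.2 (le_max_right _ _))
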